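/- Let λ1 ≥ 0, reals m ≤ M, and grid functions ω and u⁺ with u⁺_{i,j} ≥ 0 and m ≤ ω_{i,j} ≤ M for all i,j, and λ1·max_{i,j} u⁺_{i,j} ≤ 1/24. Write ω̄ = W_{1x}W_{1y}ω. Then for all i,j, both quantities ω̄_{i,j} − 8λ1·(u⁺ω)̂_{i+1/2,j} and ω̄_{i,j} − 8λ1·û⁺_{i+1/2,j}·ω̄_{i,j} lie in the interval [m·(1 − 8λ1·û⁺_{i+1/2,j}), M·(1 − 8λ1·û⁺_{i+1/2,j})]. -/
import Mathlib


noncomputable section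

/-- Grid functions with periodic indexing. -/
abbrev Grid (Nx Ny : ℕ) : Type := ZMod Nx × ZMod Ny → ℝ

variable {Nx Ny : ℕ}

/-- `(W_{1x}f)_{i,j} = (f_{i-1,j} + 4f_{i,j} + f_{i+1,j})/6` -/
def W1x (f : Grid Nx Ny) : Grid Nx Ny :=
  fun p => (f (p.1 - 1, p.2) + 4 * f p + f (p.1 + 1, p.2)) / 6

/-- `(W_{1y}f)_{i,j} = (f_{i,j-1} + 4f_{i,j} + f_{i,j+1})/6` -/
def W1y (f : Grid Nx Ny) : Grid Nx Ny :=
  fun p => (f (p.1, p.2 - 1) + 4 * f p + f (p.1, p.2 + 1)) / 6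

/-- Entrywise (Hadamard) product of grid functions. -/
def had (f g : Grid Nx Ny) : Grid Nx Ny := fun p => f p * g p

/-- Maximum of a grid function over all grid points. -/
def gridSup [NeZero Nx] [NeZero Ny] (f : Grid Nx Ny) : ℝ :=
  Finset.univ.sup' ⟨((0 : ZMod Nx), (0 : ZMod Ny)), Finset.mem_univ _⟩ f

/-- x-direction flux: `f̂_{i+1/2,j} = ((W_{1y}f)_{i,j} + (W_{1y}f)_{i+1,j})/2`,
recorded at the integer index `(i,j)`. -/
def fluxX (f : Grid Nx Ny) : Grid Nx Ny :=
  fun p => (W1y f p + W1y f (p.1 + 1, p.2)) / 2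

/-- Monotonicity bounds for the positive-velocity x-direction fluxes: both
`ω̄ − 8λ1·(u⁺ω)̂_{i+1/2,j}` and `ω̄ − 8λ1·û⁺_{i+1/2,j}·ω̄_{i,j}` lie in
`[m(1 − 8λ1·û⁺_{i+1/2,j}), M(1 − 8λ1·û⁺_{i+1/2,j})]`. -/
theorem flux_bounds_pos {Nx Ny : ℕ} [NeZero Nx] [NeZero Ny]
    (hNx : 5 ≤ Nx) (hNy : 5 ≤ Ny)
    (lam1 : ℝ) (hlam1 : 0 ≤ lam1) (m M : ℝ) (hmM : m ≤ M)
    (up ω : Grid Nx Ny) (hup : ∀ p, 0 ≤ up p) (hω : ∀ p, m ≤ ω p ∧ ω p ≤ M)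
    (hCFL : lam1 * gridSup up ≤ 1 / 24) :
    ∀ p : ZMod Nx × ZMod Ny,
      (m * (1 - 8 * lam1 * fluxX up p)
          ≤ W1x (W1y ω) p - 8 * lam1 * fluxX (had up ω) p ∧
        W1x (W1y ω) p - 8 * lam1 * fluxX (had up ω) p
          ≤ M * (1 - 8 * lam1 * fluxX up p)) ∧
      (m * (1 - 8 * lam1 * fluxX up p)
          ≤ W1x (W1y ω) p - 8 * lam1 * (fluxX up p * W1x (W1y ω) p) ∧
        W1x (W1y ω) p - 8 * lam1 * (fluxX up p * W1x (W1y ω) p)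
          ≤ M * (1 - 8 * lam1 * fluxX up p)) := by
  intro p
  obtain ⟨i, j⟩ := p
  have hsup : ∀ q, up q ≤ gridSup up := fun q => Finset.le_sup' up (Finset.mem_univ q)
  have hlup : ∀ q, lam1 * up q ≤ 1 / 24 := fun q =>
    le_trans (mul_le_mul_of_nonneg_left (hsup q) hlam1) hCFL
  have hC : ∀ q, 0 ≤ lam1 * up q := fun q => mul_nonneg hlam1 (hup q)
  have hA : ∀ q : ZMod Nx × ZMod Ny,
      lam1 * (up q * ω q) ≤ (ω q - m) / 24 + m * (lam1 * up q) := by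
    intro q
    nlinarith [mul_nonneg (sub_nonneg.2 (hlup q)) (sub_nonneg.2 (hω q).1)]
  have hB : ∀ q : ZMod Nx × ZMod Ny,
      M * (lam1 * up q) - (M - ω q) / 24 ≤ lam1 * (up q * ω q) := by
    intro q
    nlinarith [mul_nonneg (sub_nonneg.2 (hlup q)) (sub_nonneg.2 (hω q).2)]
  -- bound on the flux of up
  have hfluxnn : 0 ≤ fluxX up (i, j) := by
    simp only [fluxX, W1y]
    have := hup (i, j - 1); have := hup (i, j); have := hup (i, j + 1)
    have := hup (i + 1, j - 1); have := hup (i + 1, j); have := hup (i + 1, j + 1)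
    linarith
  have hfluxle : lam1 * fluxX up (i, j) ≤ 1 / 24 := by
    simp only [fluxX, W1y]
    have := hlup (i, j - 1); have := hlup (i, j); have := hlup (i, j + 1)
    have := hlup (i + 1, j - 1); have := hlup (i + 1, j); have := hlup (i + 1, j + 1)
    have := hC (i, j - 1); have := hC (i, j); have := hC (i, j + 1)
    have := hC (i + 1, j - 1); have := hC (i + 1, j); have := hC (i + 1, j + 1)
    nlinarith
  have hWlo : m ≤ W1x (W1y ω) (i, j) := by
    simp only [W1x, W1y]
    have := (hω (i - 1, j - 1)).1; have := (hω (i - 1, j)).1; have := (hω (i - 1, j + 1)).1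
    have := (hω (i, j - 1)).1; have := (hω (i, j)).1; have := (hω (i, j + 1)).1
    have := (hω (i + 1, j - 1)).1; have := (hω (i + 1, j)).1; have := (hω (i + 1, j + 1)).1
    linarith
  have hWhi : W1x (W1y ω) (i, j) ≤ M := by
    simp only [W1x, W1y]
    have := (hω (i - 1, j - 1)).2; have := (hω (i - 1, j)).2; have := (hω (i - 1, j + 1)).2
    have := (hω (i, j - 1)).2; have := (hω (i, j)).2; have := (hω (i, j + 1)).2
    have := (hω (i + 1, j - 1)).2; have := (hω (i + 1, j)).2; have := (hω (i + 1, j + 1)).2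
    linarith
  have h1c : 0 ≤ 1 - 8 * lam1 * fluxX up (i, j) := by linarith
  constructor
  · -- first pair
    have hA1 := hA (i, j - 1); have hA2 := hA (i, j); have hA3 := hA (i, j + 1)
    have hA4 := hA (i + 1, j - 1); have hA5 := hA (i + 1, j); have hA6 := hA (i + 1, j + 1)
    have hB1 := hB (i, j - 1); have hB2 := hB (i, j); have hB3 := hB (i, j + 1)
    have hB4 := hB (i + 1, j - 1); have hB5 := hB (i + 1, j); have hB6 := hB (i + 1, j + 1)
    have hω1 := hω (i - 1, j - 1); have hω2 := hω (i - 1, j); have hω3 := hω (i - 1, j + 1)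
    have hω4 := hω (i, j - 1); have hω5 := hω (i, j); have hω6 := hω (i, j + 1)
    have hω7 := hω (i + 1, j - 1); have hω8 := hω (i + 1, j); have hω9 := hω (i + 1, j + 1)
    simp only [W1x, W1y, fluxX, had]
    constructor
    · linarith [hω1.1, hω2.1, hω3.1, hω4.1, hω5.1, hω6.1, hω7.1, hω8.1, hω9.1,
        hA1, hA2, hA3, hA4, hA5, hA6]
    · linarith [hω1.2, hω2.2, hω3.2, hω4.2, hω5.2, hω6.2, hω7.2, hω8.2, hω9.2,
        hB1, hB2, hB3, hB4, hB5, hB6]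
  · constructor
    · nlinarith [mul_le_mul_of_nonneg_right hWlo h1c]
    · nlinarith [mul_le_mul_of_nonneg_right hWhi h1c]
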